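/- arXiv:1808.05967 — 4 statements merged into one kernel-verified Lean document; each statement's English description precedes it below -/
import Mathlib

section
/- The function G_1 : ℝ → ℝ defined by G_1(Z) = cos²(Z/2) for |Z| ≤ π and G_1(Z) = 0 for |Z| > π is continuously differentiable on ℝ, and for every Z ∈ ℝ it satisfies G_1(Z) − G_1(Z)² + (−Z/2 + ∫_0^Z G_1(Z̃)dZ̃)·G_1′(Z) = 0. -/
open Real MeasureTheory Set Filter

/-- The stable self-similar blow-up profile `G₁(Z) = cos²(Z/2)` for `|Z| ≤ π`, `0` otherwise. -/
noncomputable def G1 (Z : ℝ) : ℝ := if |Z| ≤ π then Real.cos (Z / 2) ^ 2 else 0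

/-!
Writing `c(Z) = max (-π) (min Z π)` for the clamp of `Z` to `[-π, π]`, we have
`G₁ = (1 + cos c) / 2`. Composing a smooth function with the clamp keeps it differentiable as
long as its derivative vanishes at `±π`; this gives `G₁′ = -(sin c) / 2`, and it shows that
`(c + sin c) / 2` is an antiderivative of `G₁`, so `∫₀^Z G₁ = (c + sin c) / 2`. On `[-π, π]` the
profile equation then reduces to `sin² + cos² = 1`, and outside it every term vanishes.
-/

open Topology

section Clamp

variable {φ φ' : ℝ → ℝ}

theorem hasDerivAt_comp_max_const {a : ℝ} (hφ : ∀ t, HasDerivAt φ (φ' t) t) (ha : φ' a = 0)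
    (x : ℝ) : HasDerivAt (fun y => φ (max a y)) (φ' (max a x)) x := by
  rcases lt_trichotomy x a with hx | rfl | hx
  · have hconst : (fun y => φ (max a y)) =ᶠ[𝓝 x] fun _ => φ a := by
      filter_upwards [eventually_lt_nhds hx] with y hy
      rw [max_eq_left hy.le]
    rw [max_eq_left hx.le, ha]
    exact (hasDerivAt_const x (φ a)).congr_of_eventuallyEq hconst
  · -- At the kink the constant left piece has slope `0 = φ' a`, matching the right piece.
    have hleft : HasDerivWithinAt (fun y => φ (max x y)) (φ' x) (Iic x) x := by
      rw [ha]
      exact (hasDerivWithinAt_const x _ (φ x)).congr (fun y hy => by rw [max_eq_left hy])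
        (by rw [max_self])
    have hright : HasDerivWithinAt (fun y => φ (max x y)) (φ' x) (Ici x) x :=
      (hφ x).hasDerivWithinAt.congr (fun y hy => by rw [max_eq_right hy]) (by rw [max_self])
    rw [max_self]
    simpa only [Iic_union_Ici, hasDerivWithinAt_univ] using hleft.union hright
  · have hid : (fun y => φ (max a y)) =ᶠ[𝓝 x] φ := by
      filter_upwards [eventually_gt_nhds hx] with y hy
      rw [max_eq_right hy.le]
    rw [max_eq_right hx.le]
    exact (hφ x).congr_of_eventuallyEq hid

theorem hasDerivAt_comp_min_const {b : ℝ} (hφ : ∀ t, HasDerivAt φ (φ' t) t) (hb : φ' b = 0)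
    (x : ℝ) : HasDerivAt (fun y => φ (min y b)) (φ' (min x b)) x := by
  have hφneg : ∀ t, HasDerivAt (fun s => φ (-s)) (-φ' (-t)) t := fun t => by
    have h := (hφ (-t)).comp t (hasDerivAt_neg t)
    simp only [mul_neg, mul_one] at h
    exact h
  have h := (hasDerivAt_comp_max_const hφneg (a := -b) (by simp [hb]) (-x)).comp x
    (hasDerivAt_neg x)
  have hmin : ∀ y, min y b = -max (-b) (-y) := fun y => by
    rw [max_neg_neg, neg_neg, min_comm]
  simp only [hmin, mul_neg, mul_one, neg_neg] at h ⊢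
  exact h

theorem hasDerivAt_comp_clamp {a b : ℝ} (hφ : ∀ t, HasDerivAt φ (φ' t) t) (ha : φ' a = 0)
    (hb : φ' b = 0) (x : ℝ) :
    HasDerivAt (fun y => φ (max a (min y b))) (φ' (max a (min x b))) x :=
  hasDerivAt_comp_min_const (hasDerivAt_comp_max_const hφ ha)
    (by rcases le_total a b with h | h <;> simp [h, ha, hb]) x

end Clamp

noncomputable def clampPi (Z : ℝ) : ℝ := max (-π) (min Z π)

theorem continuous_clampPi : Continuous clampPi := by
  unfold clampPi
  fun_prop

theorem clampPi_of_abs_le {Z : ℝ} (h : |Z| ≤ π) : clampPi Z = Z := by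
  rcases abs_le.mp h with ⟨hlo, hhi⟩
  rw [clampPi, min_eq_left hhi, max_eq_right hlo]

theorem clampPi_eq_pi_or_eq_neg_pi {Z : ℝ} (h : π ≤ |Z|) : clampPi Z = π ∨ clampPi Z = -π := by
  rcases le_abs'.mp h with hneg | hpos
  · right
    rw [clampPi, min_eq_left (by linarith [pi_pos]), max_eq_left hneg]
  · left
    rw [clampPi, min_eq_right hpos, max_eq_right (by linarith [pi_pos])]

theorem G1_eq_clampPi (Z : ℝ) : G1 Z = (1 + cos (clampPi Z)) / 2 := by
  rw [G1]
  split_ifs with h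
  · rw [clampPi_of_abs_le h, cos_sq, mul_div_cancel₀ Z two_ne_zero]
    ring
  · rcases clampPi_eq_pi_or_eq_neg_pi (not_le.mp h).le with hc | hc <;> simp [hc]

theorem hasDerivAt_G1 (Z : ℝ) : HasDerivAt G1 (-sin (clampPi Z) / 2) Z := by
  rw [funext G1_eq_clampPi]
  exact hasDerivAt_comp_clamp (φ := fun t => (1 + cos t) / 2)
    (fun t => ((hasDerivAt_cos t).const_add 1).div_const 2) (by simp) (by simp) Z

theorem integral_G1 (Z : ℝ) : ∫ z in (0 : ℝ)..Z, G1 z = (clampPi Z + sin (clampPi Z)) / 2 := by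
  have hantideriv : ∀ x, HasDerivAt (fun y => (clampPi y + sin (clampPi y)) / 2) (G1 x) x :=
    fun x => by
      rw [G1_eq_clampPi]
      exact hasDerivAt_comp_clamp (φ := fun t => (t + sin t) / 2)
        (fun t => ((hasDerivAt_id t).add (hasDerivAt_sin t)).div_const 2) (by simp) (by simp) x
  have hG1 : Continuous G1 := by
    rw [funext G1_eq_clampPi]
    exact (continuous_const.add (continuous_cos.comp continuous_clampPi)).div_const 2
  rw [intervalIntegral.integral_eq_sub_of_hasDerivAt (fun x _ => hantideriv x)
    (hG1.intervalIntegrable 0 Z), clampPi_of_abs_le (Z := 0) (by simp [pi_pos.le])]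
  simp

/-- `G₁` is continuously differentiable and satisfies the self-similar profile equation
`G₁ − G₁² + (−Z/2 + ∫₀^Z G₁)·G₁′ = 0` (the case `k = 1`). -/
theorem stmt3 :
    ContDiff ℝ 1 G1 ∧
    ∀ Z : ℝ,
      G1 Z - G1 Z ^ 2 + (-Z / 2 + ∫ z in (0:ℝ)..Z, G1 z) * deriv G1 Z = 0 := by
  refine ⟨contDiff_one_iff_deriv.mpr ⟨fun Z => (hasDerivAt_G1 Z).differentiableAt, ?_⟩, fun Z => ?_⟩
  · rw [funext fun Z => (hasDerivAt_G1 Z).deriv]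
    exact (continuous_sin.comp continuous_clampPi).neg.div_const 2
  · rw [integral_G1, (hasDerivAt_G1 Z).deriv, G1_eq_clampPi]
    rcases le_total |Z| π with h | h
    · rw [clampPi_of_abs_le h]
      linear_combination (-1 / 4 : ℝ) * sin_sq_add_cos_sq Z
    · rcases clampPi_eq_pi_or_eq_neg_pi h with hc | hc <;> simp [hc]
end

section
/- Let ε : ℝ → ℝ be continuously differentiable and suppose that the functions Y ↦ ε(Y)²·e^{−Y²/4}, Y ↦ ε′(Y)²·e^{−Y²/4}, and Y ↦ Y²·ε(Y)²·e^{−Y²/4} are integrable on ℝ. Then ∫_ℝ Y²·ε(Y)²·e^{−Y²/4} dY ≤ 4·∫_ℝ ε(Y)²·e^{−Y²/4} dY + 16·∫_ℝ ε′(Y)²·e^{−Y²/4} dY. -/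
/-!
With `w Y = e^{-Y²/4}` one has `w' = -(Y/2) w`, so integrating the derivative of `Y ε² w`
over the line gives `∫ Y² ε² w = 2 ∫ ε² w + 4 ∫ Y ε ε' w`. The cross term is absorbed by
`4ab ≤ a²/2 + 8b²` with `a = Y ε`, `b = ε'`, which leaves half of `∫ Y² ε² w` on the right.
-/

open Real MeasureTheory Set

theorem integrable_mul_mul_of_integrable_sq_mul {α : Type*} [MeasurableSpace α] {μ : Measure α}
    {f g w : α → ℝ} (hw : ∀ x, 0 ≤ w x)
    (hmeas : AEStronglyMeasurable (fun x => f x * g x * w x) μ)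
    (hf : Integrable (fun x => f x ^ 2 * w x) μ) (hg : Integrable (fun x => g x ^ 2 * w x) μ) :
    Integrable (fun x => f x * g x * w x) μ := by
  refine ((hf.add hg).div_const 2).mono' hmeas (Filter.Eventually.of_forall fun x => ?_)
  have hfg : 2 * |f x * g x| ≤ f x ^ 2 + g x ^ 2 := by
    rw [abs_mul, ← sq_abs (f x), ← sq_abs (g x)]
    nlinarith [sq_nonneg (|f x| - |g x|)]
  rw [Real.norm_eq_abs, abs_mul, abs_of_nonneg (hw x)]
  simp only [Pi.add_apply]
  nlinarith [hw x]

theorem hasDerivAt_exp_neg_sq_div_four (Y : ℝ) :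
    HasDerivAt (fun Y : ℝ => exp (-Y ^ 2 / 4)) (-(Y / 2) * exp (-Y ^ 2 / 4)) Y := by
  have hinner : HasDerivAt (fun Y : ℝ => -Y ^ 2 / 4) (-(Y / 2)) Y := by
    refine ((hasDerivAt_pow 2 Y).neg.div_const 4).congr_deriv ?_
    push_cast
    ring
  convert hinner.exp using 1
  ring

theorem integral_sq_mul_sq_mul_exp_neg_sq_div_four_eq {ε : ℝ → ℝ} (hε : Differentiable ℝ ε)
    (h1 : Integrable (fun Y : ℝ => ε Y ^ 2 * exp (-Y ^ 2 / 4)))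
    (hcross : Integrable (fun Y : ℝ => Y * ε Y * deriv ε Y * exp (-Y ^ 2 / 4)))
    (h3 : Integrable (fun Y : ℝ => Y ^ 2 * ε Y ^ 2 * exp (-Y ^ 2 / 4))) :
    ∫ Y : ℝ, Y ^ 2 * ε Y ^ 2 * exp (-Y ^ 2 / 4)
      = ∫ Y : ℝ, (2 * (ε Y ^ 2 * exp (-Y ^ 2 / 4))
          + 4 * (Y * ε Y * deriv ε Y * exp (-Y ^ 2 / 4))) := by
  have hsum : Integrable (fun Y : ℝ => 2 * (ε Y ^ 2 * exp (-Y ^ 2 / 4))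
      + 4 * (Y * ε Y * deriv ε Y * exp (-Y ^ 2 / 4))) :=
    (h1.const_mul 2).add (hcross.const_mul 4)
  have hderiv : ∀ Y, HasDerivAt (fun Y => Y * ε Y * ε Y * exp (-Y ^ 2 / 4))
      (((2 * (ε Y ^ 2 * exp (-Y ^ 2 / 4)) + 4 * (Y * ε Y * deriv ε Y * exp (-Y ^ 2 / 4)))
        - Y ^ 2 * ε Y ^ 2 * exp (-Y ^ 2 / 4)) / 2) Y := fun Y => by
    have hε' := (hε Y).hasDerivAt
    refine ((((hasDerivAt_id Y).mul hε').mul hε').mul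
      (hasDerivAt_exp_neg_sq_div_four Y)).congr_deriv ?_
    simp only [id, Pi.mul_apply]
    ring
  have hG : Integrable (fun Y : ℝ => Y * ε Y * ε Y * exp (-Y ^ 2 / 4)) :=
    integrable_mul_mul_of_integrable_sq_mul (fun Y => (exp_pos _).le)
      (by have := hε.continuous.measurable; fun_prop) (by simpa only [mul_pow] using h3) h1
  have hzero :=
    integral_eq_zero_of_hasDerivAt_of_integrable hderiv ((hsum.sub h3).div_const 2) hG
  rw [integral_div, integral_sub hsum h3] at hzero
  linarith


/-- Weighted Poincaré-type inequality for the Gaussian weight `e^{−Y²/4}`: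
`∫ Y²ε²e^{−Y²/4} ≤ 4∫ ε²e^{−Y²/4} + 16∫ (ε′)²e^{−Y²/4}`. -/
theorem stmt6 (ε : ℝ → ℝ) (hε : ContDiff ℝ 1 ε)
    (h1 : Integrable (fun Y : ℝ => ε Y ^ 2 * Real.exp (-Y ^ 2 / 4)))
    (h2 : Integrable (fun Y : ℝ => deriv ε Y ^ 2 * Real.exp (-Y ^ 2 / 4)))
    (h3 : Integrable (fun Y : ℝ => Y ^ 2 * ε Y ^ 2 * Real.exp (-Y ^ 2 / 4))) :
    (∫ Y : ℝ, Y ^ 2 * ε Y ^ 2 * Real.exp (-Y ^ 2 / 4))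
      ≤ 4 * (∫ Y : ℝ, ε Y ^ 2 * Real.exp (-Y ^ 2 / 4))
        + 16 * ∫ Y : ℝ, deriv ε Y ^ 2 * Real.exp (-Y ^ 2 / 4) := by
  have hεd : Differentiable ℝ ε := hε.differentiable one_ne_zero
  have hcross : Integrable (fun Y : ℝ => Y * ε Y * deriv ε Y * exp (-Y ^ 2 / 4)) :=
    integrable_mul_mul_of_integrable_sq_mul (fun Y => (exp_pos _).le)
      (by have := measurable_deriv ε; have := hεd.continuous.measurable; fun_prop)
      (by simpa only [mul_pow] using h3) h2
  have hcross_le : ∫ Y : ℝ, 4 * (Y * ε Y * deriv ε Y * exp (-Y ^ 2 / 4))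
      ≤ ∫ Y : ℝ, (Y ^ 2 * ε Y ^ 2 * exp (-Y ^ 2 / 4) / 2
          + 8 * (deriv ε Y ^ 2 * exp (-Y ^ 2 / 4))) :=
    integral_mono (hcross.const_mul 4) ((h3.div_const 2).add (h2.const_mul 8)) fun Y => by
      nlinarith [mul_nonneg (sq_nonneg (Y * ε Y - 4 * deriv ε Y)) (exp_pos (-Y ^ 2 / 4)).le]
  have hidentity := integral_sq_mul_sq_mul_exp_neg_sq_div_four_eq hεd h1 hcross h3
  rw [integral_add (h1.const_mul 2) (hcross.const_mul 4), integral_const_mul,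
    integral_const_mul] at hidentity
  rw [integral_add (h3.div_const 2) (h2.const_mul 8), integral_const_mul, integral_const_mul,
    integral_div] at hcross_le
  linarith
end

section
/- Let k(y) = Σ_{n=0}^∞ yⁿ/(n!)² and let u₀ : [0,∞) → ℝ be continuously differentiable. Define, for t ≥ 0 and x ≥ 0, u(t,x) := u₀(0)·k(tx) + ∫_0^x u₀′(y)·k(t(x−y)) dy. Then u(0,x) = u₀(x) for all x ≥ 0, and for all t ≥ 0 and x ≥ 0, ∂_t u(t,x) = ∫_0^x u(t,x̃) dx̃. -/
/-!
Write `kₘ(y) = Σ yⁿ / ((n + m)! n!)`, so that `k = k₀`. Termwise, `kₘ' = kₘ₊₁` and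
`(m + 1) kₘ₊₁ + y kₘ₊₂ = kₘ`; for `m = 0` this says that `z ↦ (z - a) k₁(t (z - a))` is a
primitive of `z ↦ k(t (z - a))`. Differentiating under the integral sign gives
`∂ₜu(t,x) = u₀(0) x k₁(tx) + ∫₀ˣ u₀′(y) (x - y) k₁(t(x - y)) dy`, and integrating `u(t,·)` over
`[0, x]`, after swapping the order of integration over the triangle `0 ≤ y ≤ z ≤ x`, gives the
same expression. At `t = 0` the kernel is identically `1`, so `u(0,x) = u₀(0) + ∫₀ˣ u₀′ = u₀(x)`.
-/

open Real MeasureTheory Set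

/-- The kernel `k(y) = Σ_{n≥0} yⁿ/(n!)²` of the nonlocal model problem. -/
noncomputable def kfun (y : ℝ) : ℝ := ∑' n : ℕ, y ^ n / (Nat.factorial n : ℝ) ^ 2

/-- The convolution-type solution `u(t,x) = u₀(0)k(tx) + ∫₀^x u₀′(y)k(t(x−y))dy` of the
nonlocal model problem with initial datum `u₀`. -/
noncomputable def ufun (u₀ : ℝ → ℝ) (t x : ℝ) : ℝ :=
  u₀ 0 * kfun (t * x) + ∫ y in (0:ℝ)..x, derivWithin u₀ (Ici 0) y * kfun (t * (x - y))

open scoped Nat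

section PowerSeries

variable {c : ℕ → ℝ}

theorem summable_mul_pow_of_abs_le_inv_factorial (hc : ∀ n, |c n| ≤ (n ! : ℝ)⁻¹) (y : ℝ) :
    Summable fun n => c n * y ^ n := by
  refine .of_norm_bounded (Real.summable_pow_div_factorial |y|) fun n => ?_
  rw [Real.norm_eq_abs, abs_mul, abs_pow, div_eq_inv_mul]
  gcongr
  exact hc n

theorem hasDerivAt_tsum_mul_pow_of_abs_le_inv_factorial (hc : ∀ n, |c n| ≤ (n ! : ℝ)⁻¹)
    (y : ℝ) :
    HasDerivAt (fun x => ∑' n, c n * x ^ n) (∑' n : ℕ, ((n : ℝ) + 1) * c (n + 1) * y ^ n) y := by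
  set R := |y| + 1
  have hR : 1 ≤ R := le_add_of_nonneg_left (abs_nonneg y)
  have hyR : y ∈ Metric.ball (0 : ℝ) R := by simp [R]
  have hbound : ∀ n, ∀ x ∈ Metric.ball (0 : ℝ) R,
      ‖c n * ((n : ℝ) * x ^ (n - 1))‖ ≤ (2 * R) ^ n / n ! := by
    intro n x hx
    rw [mem_ball_zero_iff, Real.norm_eq_abs] at hx
    have hn : (n : ℝ) ≤ 2 ^ n := by exact_mod_cast n.lt_two_pow_self.le
    have hxn : |x| ^ (n - 1) ≤ R ^ n :=
      (pow_le_pow_left₀ (abs_nonneg x) hx.le _).trans (pow_le_pow_right₀ hR (n.sub_le 1))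
    rw [Real.norm_eq_abs, abs_mul, abs_mul, abs_pow, Nat.abs_cast, mul_pow, div_eq_inv_mul]
    gcongr
    exact hc n
  have hsummable := Real.summable_pow_div_factorial (2 * R)
  have hderiv := hasDerivAt_tsum_of_isPreconnected hsummable Metric.isOpen_ball
    (convex_ball (0 : ℝ) R).isPreconnected (fun n x _ => (hasDerivAt_pow n x).const_mul (c n))
    hbound (Metric.mem_ball_self (by positivity)) (summable_mul_pow_of_abs_le_inv_factorial hc 0)
    hyR
  have hshift : ∑' n, c n * ((n : ℝ) * y ^ (n - 1))
      = ∑' n : ℕ, ((n : ℝ) + 1) * c (n + 1) * y ^ n := by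
    rw [(Summable.of_norm_bounded hsummable fun n => hbound n y hyR).tsum_eq_zero_add]
    simp only [Nat.cast_zero, zero_mul, mul_zero, zero_add, Nat.cast_add, Nat.cast_one,
      Nat.add_sub_cancel]
    exact tsum_congr fun n => by ring
  exact hshift ▸ hderiv

end PowerSeries

section IntervalIntegral

variable {E : Type*} [NormedAddCommGroup E] [NormedSpace ℝ E]

theorem hasDerivAt_intervalIntegral_of_continuous {F F' : ℝ → ℝ → E}
    (hF : Continuous (Function.uncurry F)) (hF' : Continuous (Function.uncurry F'))
    (hderiv : ∀ s y, HasDerivAt (F · y) (F' s y) s) (a b t : ℝ) :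
    HasDerivAt (fun s => ∫ y in a..b, F s y) (∫ y in a..b, F' t y) t := by
  obtain ⟨C, hC⟩ := (isCompact_closedBall t 1 |>.prod isCompact_uIcc).exists_bound_of_continuousOn
      hF'.continuousOn
  refine (intervalIntegral.hasDerivAt_integral_of_dominated_loc_of_deriv_le (bound := fun _ => C)
    (Metric.ball_mem_nhds t one_pos) (.of_forall fun s => ?_) ?_ ?_ ?_ intervalIntegrable_const
    (.of_forall fun y _ s _ => hderiv s y)).2
  · exact (hF.comp (Continuous.prodMk_right s)).aestronglyMeasurable
  · exact (hF.comp (Continuous.prodMk_right t)).intervalIntegrable a b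
  · exact (hF'.comp (Continuous.prodMk_right t)).aestronglyMeasurable
  · exact .of_forall fun y hy s hs =>
      hC (s, y) ⟨Metric.ball_subset_closedBall hs, uIoc_subset_uIcc hy⟩

theorem intervalIntegral_integral_swap_triangle {f : ℝ → ℝ → E}
    (hf : Continuous (Function.uncurry f)) {a b : ℝ} (hab : a ≤ b) :
    ∫ z in a..b, ∫ y in a..z, f z y = ∫ y in a..b, ∫ z in y..b, f z y := by
  set μ := volume.restrict (Ioc a b)
  set g : ℝ × ℝ → E := {p | p.2 ≤ p.1}.indicator (Function.uncurry f)
  have hg : Integrable g (μ.prod μ) := by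
    rw [Measure.prod_restrict]
    refine IntegrableOn.indicator ?_ (measurableSet_le measurable_snd measurable_fst)
    exact (hf.continuousOn.integrableOn_compact (isCompact_Icc.prod isCompact_Icc)).mono_set
      (prod_mono Ioc_subset_Icc_self Ioc_subset_Icc_self)
  have hinner_left : ∀ z ∈ Ioc a b, ∫ y, g (z, y) ∂μ = ∫ y in a..z, f z y := by
    intro z hz
    rw [show (fun y => g (z, y)) = (Iic z).indicator (f z) by ext y; simp [g, indicator_apply],
      integral_indicator measurableSet_Iic, Measure.restrict_restrict measurableSet_Iic,
      intervalIntegral.integral_of_le hz.1.le, Iic_inter_Ioc_of_le hz.2]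
  have hinner_right : ∀ y ∈ Ioc a b, ∫ z, g (z, y) ∂μ = ∫ z in y..b, f z y := by
    intro y hy
    have hset : Ici y ∩ Ioc a b = Icc y b := by
      ext z
      simp only [mem_inter_iff, mem_Ici, mem_Ioc, mem_Icc]
      exact ⟨fun h => ⟨h.1, h.2.2⟩, fun h => ⟨h.1, hy.1.trans_le h.1, h.2⟩⟩
    rw [show (fun z => g (z, y)) = (Ici y).indicator (f · y) by ext z; simp [g, indicator_apply],
      integral_indicator measurableSet_Ici, Measure.restrict_restrict measurableSet_Ici,
      intervalIntegral.integral_of_le hy.2, hset, integral_Icc_eq_integral_Ioc]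
  calc ∫ z in a..b, ∫ y in a..z, f z y = ∫ z, ∫ y, g (z, y) ∂μ ∂μ := by
        rw [intervalIntegral.integral_of_le hab]
        exact setIntegral_congr_fun measurableSet_Ioc fun z hz => (hinner_left z hz).symm
    _ = ∫ y, ∫ z, g (z, y) ∂μ ∂μ := integral_integral_swap hg
    _ = ∫ y in a..b, ∫ z in y..b, f z y := by
        rw [intervalIntegral.integral_of_le hab]
        exact setIntegral_congr_fun measurableSet_Ioc hinner_right

end IntervalIntegral

theorem integral_derivWithin_Ici_of_contDiffOn_Ici {f : ℝ → ℝ} {a b : ℝ}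
    (hf : ContDiffOn ℝ 1 f (Ici a)) (hab : a ≤ b) :
    ∫ x in a..b, derivWithin f (Ici a) x = f b - f a := by
  rw [← intervalIntegral.integral_deriv_of_contDiffOn_Icc (hf.mono Icc_subset_Ici_self) hab,
    intervalIntegral.integral_of_le hab, intervalIntegral.integral_of_le hab]
  refine integral_congr_ae ?_
  rw [← restrict_Ioo_eq_restrict_Ioc]
  filter_upwards [self_mem_ae_restrict measurableSet_Ioo] with x hx
  exact derivWithin_of_mem_nhds (Ici_mem_nhds hx.1)

-- `kernelSeries m y = y^(-m/2) Iₘ(2√y)`, with `Iₘ` the modified Bessel function.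
noncomputable def kernelCoeff (m n : ℕ) : ℝ := ((n + m)! * n ! : ℝ)⁻¹

noncomputable def kernelSeries (m : ℕ) (y : ℝ) : ℝ := ∑' n, kernelCoeff m n * y ^ n

theorem abs_kernelCoeff_le (m n : ℕ) : |kernelCoeff m n| ≤ (n ! : ℝ)⁻¹ := by
  rw [kernelCoeff, abs_of_nonneg (by positivity)]
  refine inv_anti₀ (by positivity) (le_mul_of_one_le_left (by positivity) ?_)
  exact_mod_cast (n + m).factorial_pos

theorem succ_mul_kernelCoeff_succ (m n : ℕ) :
    ((n : ℝ) + 1) * kernelCoeff m (n + 1) = kernelCoeff (m + 1) n := by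
  rw [kernelCoeff, kernelCoeff, show n + 1 + m = n + (m + 1) by ring, Nat.factorial_succ n]
  push_cast
  field_simp

theorem add_succ_mul_kernelCoeff_succ (m n : ℕ) :
    ((n : ℝ) + m + 1) * kernelCoeff (m + 1) n = kernelCoeff m n := by
  rw [kernelCoeff, kernelCoeff, ← add_assoc, Nat.factorial_succ (n + m)]
  push_cast
  field_simp

theorem summable_kernelSeries (m : ℕ) (y : ℝ) : Summable fun n => kernelCoeff m n * y ^ n :=
  summable_mul_pow_of_abs_le_inv_factorial (abs_kernelCoeff_le m) y

theorem hasDerivAt_kernelSeries (m : ℕ) (y : ℝ) :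
    HasDerivAt (kernelSeries m) (kernelSeries (m + 1) y) y := by
  have h := hasDerivAt_tsum_mul_pow_of_abs_le_inv_factorial (abs_kernelCoeff_le m) y
  simp only [succ_mul_kernelCoeff_succ] at h
  exact h

@[fun_prop]
theorem continuous_kernelSeries (m : ℕ) : Continuous (kernelSeries m) :=
  continuous_iff_continuousAt.2 fun y => (hasDerivAt_kernelSeries m y).continuousAt

theorem succ_mul_kernelSeries_succ_add_mul (m : ℕ) (y : ℝ) :
    (m + 1) * kernelSeries (m + 1) y + y * kernelSeries (m + 2) y = kernelSeries m y := by
  set d : ℕ → ℝ := fun n => n * kernelCoeff (m + 1) n * y ^ n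
  have hshift : (fun n => d (n + 1)) = fun n => y * (kernelCoeff (m + 2) n * y ^ n) := by
    ext n
    simp only [d, Nat.cast_succ, succ_mul_kernelCoeff_succ, pow_succ]
    ring
  have hd : Summable d := by
    rw [← summable_nat_add_iff 1, hshift]
    exact (summable_kernelSeries _ y).mul_left y
  have hyd : y * kernelSeries (m + 2) y = ∑' n, d n := by
    rw [tsum_eq_zero_add' (by rw [hshift]; exact (summable_kernelSeries _ y).mul_left y),
      hshift, kernelSeries, tsum_mul_left]
    simp [d]
  rw [hyd, kernelSeries, kernelSeries, ← tsum_mul_left,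
    ← ((summable_kernelSeries _ y).mul_left _).tsum_add hd]
  refine tsum_congr fun n => ?_
  rw [← add_succ_mul_kernelCoeff_succ m n]
  ring

theorem kfun_eq_kernelSeries_zero : kfun = kernelSeries 0 := by
  ext y
  refine tsum_congr fun n => ?_
  rw [kernelCoeff, add_zero, div_eq_inv_mul, sq]

theorem kfun_zero : kfun 0 = 1 := by
  rw [kfun, tsum_eq_single 0 fun n hn => by simp [zero_pow hn]]
  simp

@[fun_prop]
theorem continuous_kfun : Continuous kfun :=
  kfun_eq_kernelSeries_zero ▸ continuous_kernelSeries 0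

theorem hasDerivAt_kfun (y : ℝ) : HasDerivAt kfun (kernelSeries 1 y) y :=
  kfun_eq_kernelSeries_zero ▸ hasDerivAt_kernelSeries 0 y

theorem hasDerivAt_kfun_mul_const (a s : ℝ) :
    HasDerivAt (fun s => kfun (s * a)) (a * kernelSeries 1 (s * a)) s := by
  have h := (hasDerivAt_kfun (s * a)).comp s ((hasDerivAt_id' s).mul_const a)
  rw [one_mul, mul_comm] at h
  exact h

theorem hasDerivAt_sub_mul_kernelSeries_one (t a z : ℝ) :
    HasDerivAt (fun z => (z - a) * kernelSeries 1 (t * (z - a))) (kfun (t * (z - a))) z := by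
  have hinner : HasDerivAt (fun z => t * (z - a)) t z := by
    simpa using ((hasDerivAt_id z).sub_const a).const_mul t
  refine (((hasDerivAt_id z).sub_const a).mul
    ((hasDerivAt_kernelSeries 1 _).comp z hinner)).congr_deriv ?_
  rw [kfun_eq_kernelSeries_zero, ← succ_mul_kernelSeries_succ_add_mul 0]
  simp only [id, Function.comp_apply, Nat.cast_zero, zero_add, one_mul]
  ring

theorem integral_kfun_mul_sub (t a x : ℝ) :
    ∫ z in a..x, kfun (t * (z - a)) = (x - a) * kernelSeries 1 (t * (x - a)) := by
  rw [intervalIntegral.integral_eq_sub_of_hasDerivAt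
    (fun z _ => hasDerivAt_sub_mul_kernelSeries_one t a z)
    (Continuous.intervalIntegrable (by fun_prop) _ _)]
  simp

noncomputable def kernelSolution (c : ℝ) (g : ℝ → ℝ) (t x : ℝ) : ℝ :=
  c * kfun (t * x) + ∫ y in (0 : ℝ)..x, g y * kfun (t * (x - y))

theorem hasDerivAt_kernelSolution (c : ℝ) {g : ℝ → ℝ} (hg : Continuous g) (t : ℝ) {x : ℝ}
    (hx : 0 ≤ x) :
    HasDerivAt (kernelSolution c g · x) (∫ z in (0 : ℝ)..x, kernelSolution c g t z) t := by
  have hfirst := (hasDerivAt_kfun_mul_const x t).const_mul c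
  have hsecond := hasDerivAt_intervalIntegral_of_continuous
    (F := fun s y => g y * kfun (s * (x - y)))
    (F' := fun s y => g y * ((x - y) * kernelSeries 1 (s * (x - y))))
    (by fun_prop) (by fun_prop) (fun s y => (hasDerivAt_kfun_mul_const (x - y) s).const_mul (g y))
    0 x t
  refine (hfirst.add hsecond).congr_deriv ?_
  simp only [kernelSolution]
  rw [intervalIntegral.integral_add (Continuous.intervalIntegrable (by fun_prop) _ _)
      (Continuous.intervalIntegrable (by fun_prop) _ _),
      intervalIntegral.integral_const_mul,
      show ∫ z in (0 : ℝ)..x, kfun (t * z) = x * kernelSeries 1 (t * x) by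
        simpa using integral_kfun_mul_sub t 0 x,
      intervalIntegral_integral_swap_triangle (f := fun z y => g y * kfun (t * (z - y)))
        (by fun_prop) hx]
  simp only [intervalIntegral.integral_const_mul, integral_kfun_mul_sub]

theorem kernelSolution_congr {g g' : ℝ → ℝ} {x : ℝ} (hx : 0 ≤ x) (hgg' : EqOn g g' (Icc 0 x))
    (c t : ℝ) : kernelSolution c g t x = kernelSolution c g' t x := by
  refine congrArg (_ + ·) (intervalIntegral.integral_congr fun y hy => ?_)
  rw [uIcc_of_le hx] at hy
  simp only [hgg' hy]

/-- `u` attains the initial datum `u₀` at `t = 0` and solves `∂_t u(t,x) = ∫₀^x u(t,·)`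
for `t, x ≥ 0`. -/
theorem stmt12 (u₀ : ℝ → ℝ) (h : ContDiffOn ℝ 1 u₀ (Ici 0)) :
    (∀ x ≥ (0:ℝ), ufun u₀ 0 x = u₀ x) ∧
    ∀ t ≥ (0:ℝ), ∀ x ≥ (0:ℝ),
      deriv (fun s => ufun u₀ s x) t = ∫ z in (0:ℝ)..x, ufun u₀ t z := by
  refine ⟨fun x hx => ?_, fun t _ x hx => ?_⟩
  · simp only [ufun, zero_mul, kfun_zero, mul_one,
      integral_derivWithin_Ici_of_contDiffOn_Ici h hx]
    ring
  · set g := (Icc 0 x).domRestrict (derivWithin u₀ (Ici 0))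
    have hg : Continuous (IccExtend hx g) := continuous_IccExtend_iff.2
      ((h.continuousOn_derivWithin (uniqueDiffOn_Ici 0) le_rfl).mono
        Icc_subset_Ici_self).domRestrict
    have hufun : ∀ s, ∀ z ∈ Icc 0 x, ufun u₀ s z = kernelSolution (u₀ 0) (IccExtend hx g) s z :=
      fun s z hz => kernelSolution_congr hz.1
        (fun y hy => (IccExtend_of_mem hx g ⟨hy.1, hy.2.trans hz.2⟩).symm) _ _
    rw [funext fun s => hufun s x ⟨hx, le_rfl⟩, (hasDerivAt_kernelSolution _ hg t hx).deriv]
    exact intervalIntegral.integral_congr fun z hz => (hufun t z (uIcc_of_le hx ▸ hz)).symm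
end

section
/- Let k(y) = Σ_{n=0}^∞ yⁿ/(n!)². Then k(y)/e^{√y} → +∞ as y → +∞, and for every α > 1/2, k(y)/e^{y^α} → 0 as y → +∞. -/
open Real Filter

/-!
Write `y = z²`. The `n`-th term of `k(y)` is `4ⁿ z²ⁿ / (4ⁿ (n!)²)`, and the central
binomial bounds `(2n)! ≤ 4ⁿ (n!)² ≤ (2n+1)!` compare it with the `n`-th terms of the series
of `cosh (2z)` and `sinh (2z) / (2z)`. Hence `sinh (2z) / (2z) ≤ k(z²) ≤ cosh (2z) ≤ e^{2z}`.
The lower bound gives `k(z²) / e^z ≥ (e^z - 1) / (4z) ≥ z / 8`; the upper bound gives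
`k(y) / e^{y^α} ≤ e^{2√y - y^α}`, whose exponent tends to `-∞` when `α > 1/2`.
-/

namespace Nat

theorem factorial_two_mul_eq_centralBinom_mul_factorial_sq (n : ℕ) :
    (2 * n)! = centralBinom n * n ! ^ 2 := by
  rw [centralBinom_eq_two_mul_choose, two_mul, ← add_choose_mul_factorial_mul_factorial, sq,
    mul_assoc]

theorem factorial_two_mul_le_four_pow_mul_factorial_sq (n : ℕ) :
    (2 * n)! ≤ 4 ^ n * n ! ^ 2 := by
  rw [factorial_two_mul_eq_centralBinom_mul_factorial_sq]
  gcongr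
  exact centralBinom_le_four_pow n

theorem four_pow_mul_factorial_sq_le_factorial_two_mul_add_one (n : ℕ) :
    4 ^ n * n ! ^ 2 ≤ (2 * n + 1)! := by
  rw [factorial_succ, factorial_two_mul_eq_centralBinom_mul_factorial_sq, ← mul_assoc,
    centralBinom_eq_two_mul_choose]
  gcongr
  exact four_pow_le_two_mul_add_one_mul_central_binom n

end Nat

theorem summable_pow_div_factorial_sq (y : ℝ) :
    Summable (fun n : ℕ => y ^ n / (n.factorial : ℝ) ^ 2) := by
  refine (Real.summable_pow_div_factorial |y|).of_norm_bounded fun n => ?_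
  rw [norm_div, norm_pow, norm_pow, Real.norm_natCast, Real.norm_eq_abs]
  gcongr
  exact le_self_pow₀ (by exact_mod_cast n.factorial_pos) two_ne_zero

theorem kfun_nonneg {y : ℝ} (hy : 0 ≤ y) : 0 ≤ kfun y :=
  tsum_nonneg fun _ => by positivity

theorem two_mul_pow_two_mul (z : ℝ) (n : ℕ) : (2 * z) ^ (2 * n) = 4 ^ n * (z ^ 2) ^ n := by
  rw [pow_mul, mul_pow, mul_pow]; norm_num

theorem kfun_sq_le_cosh_two_mul (z : ℝ) : kfun (z ^ 2) ≤ cosh (2 * z) := by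
  rw [cosh_eq_tsum]
  refine (summable_pow_div_factorial_sq _).tsum_le_tsum (fun n => ?_) (hasSum_cosh _).summable
  have h := Nat.factorial_two_mul_le_four_pow_mul_factorial_sq n
  rw [two_mul_pow_two_mul, ← mul_div_mul_left _ _ (by positivity : (4 : ℝ) ^ n ≠ 0)]
  gcongr
  exact_mod_cast h

theorem sinh_two_mul_div_le_kfun_sq {z : ℝ} (hz : z ≠ 0) :
    sinh (2 * z) / (2 * z) ≤ kfun (z ^ 2) := by
  rw [sinh_eq_tsum, ← tsum_div_const]
  refine ((hasSum_sinh _).summable.div_const _).tsum_le_tsum (fun n => ?_)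
    (summable_pow_div_factorial_sq _)
  have h := Nat.four_pow_mul_factorial_sq_le_factorial_two_mul_add_one n
  have h4 : (2 * z) ^ (2 * n + 1) / ((2 * n + 1).factorial : ℝ) / (2 * z) =
      4 ^ n * (z ^ 2) ^ n / ((2 * n + 1).factorial : ℝ) := by
    rw [pow_succ, two_mul_pow_two_mul]; field_simp
  rw [h4, ← mul_div_mul_left ((z ^ 2) ^ n) _ (by positivity : (4 : ℝ) ^ n ≠ 0)]
  gcongr
  exact_mod_cast h

theorem div_eight_le_kfun_sq_div_exp {z : ℝ} (hz : 0 < z) : z / 8 ≤ kfun (z ^ 2) / exp z := by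
  have hq := quadratic_le_exp_of_nonneg hz.le
  calc z / 8 ≤ (exp z - 1) / (4 * z) := by
        rw [le_div_iff₀ (by positivity)]; nlinarith
    _ ≤ sinh (2 * z) / (2 * z) / exp z := by
        rw [div_div, div_le_div_iff₀ (by positivity) (by positivity), sinh_eq]
        have h2 : exp (2 * z) = exp z * exp z := by rw [two_mul, exp_add]
        have h3 : exp (-(2 * z)) ≤ 1 := exp_le_one_iff.2 (by linarith)
        have h4 : 1 ≤ exp z := one_le_exp hz.le
        rw [h2]; nlinarith
    _ ≤ kfun (z ^ 2) / exp z := by gcongr; exact sinh_two_mul_div_le_kfun_sq hz.ne'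

theorem tendsto_const_mul_rpow_sub_rpow_atBot (c : ℝ) {a b : ℝ} (hb : 0 < b) (hab : a < b) :
    Tendsto (fun y : ℝ => c * y ^ a - y ^ b) atTop atBot := by
  have hlim : Tendsto (fun y : ℝ => c * y ^ (a - b) - 1) atTop (nhds (-1)) := by
    simpa using ((tendsto_rpow_neg_atTop (sub_pos.2 hab)).const_mul c).sub_const 1
  refine ((tendsto_rpow_atTop hb).atTop_mul_neg (by norm_num) hlim).congr' ?_
  filter_upwards [eventually_gt_atTop 0] with y hy
  rw [mul_sub, mul_one, mul_left_comm, ← rpow_add hy]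
  ring_nf

theorem cosh_le_exp_of_nonneg {x : ℝ} (hx : 0 ≤ x) : cosh x ≤ exp x := by
  rw [cosh_eq]
  linarith [exp_le_exp.2 (neg_le_self hx)]

theorem kfun_le_exp_two_mul_sqrt {y : ℝ} (hy : 0 ≤ y) : kfun y ≤ exp (2 * √y) :=
  calc kfun y = kfun (√y ^ 2) := by rw [sq_sqrt hy]
    _ ≤ cosh (2 * √y) := kfun_sq_le_cosh_two_mul _
    _ ≤ exp (2 * √y) := cosh_le_exp_of_nonneg (by positivity)

/-- Sub-exponential growth of `k`: `k(y)/e^{√y} → ∞` and `k(y)/e^{y^α} → 0` for every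
`α > 1/2`, as `y → +∞`. -/
theorem stmt13 :
    Tendsto (fun y : ℝ => kfun y / Real.exp (Real.sqrt y)) atTop atTop ∧
    ∀ α : ℝ, 1 / 2 < α →
      Tendsto (fun y : ℝ => kfun y / Real.exp (y ^ α)) atTop (nhds 0) := by
  constructor
  · refine tendsto_atTop_mono' _ ?_
      (tendsto_sqrt_atTop.atTop_div_const (by norm_num : (0 : ℝ) < 8))
    filter_upwards [eventually_gt_atTop 0] with y hy
    simpa only [sq_sqrt hy.le] using div_eight_le_kfun_sq_div_exp (sqrt_pos.2 hy)
  · intro α hα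
    have hexp : Tendsto (fun y => exp (2 * √y - y ^ α)) atTop (nhds 0) := by
      simp_rw [sqrt_eq_rpow]
      exact tendsto_exp_atBot.comp (tendsto_const_mul_rpow_sub_rpow_atBot 2 (by linarith) hα)
    refine squeeze_zero' ?_ ?_ hexp
    · filter_upwards [eventually_ge_atTop 0] with y hy
      exact div_nonneg (kfun_nonneg hy) (exp_pos _).le
    · filter_upwards [eventually_ge_atTop 0] with y hy
      rw [exp_sub]
      gcongr
      exact kfun_le_exp_two_mul_sqrt hy
end
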